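/- arXiv:math/0509179 — 4 statements merged into one kernel-verified Lean document; each statement's English description precedes it below -/
import Mathlib

section
/- Let m ≥ 0 and let p = (π, r) : ℝ × ℝ^m → ℝ × ℝ^m be a continuous ℤ^{1+m}-periodic map, viewed as a continuous 1-form π dθ + Σ_i r_i dy_i on the torus 𝕋^{1+m} = (ℝ/ℤ) × (ℝ^m/ℤ^m), where θ denotes the first coordinate and y the remaining ones. Assume there exists y_0 ∈ ℝ^m with P(y_0) := ∫_0^1 π(θ, y_0) dθ ≠ 0. Then there exists a C^1 (indeed smooth) ℤ^{1+m}-periodic function f : ℝ × ℝ^m → ℝ such that p(θ,y) − ∇f(θ,y) ≠ 0 for every (θ,y) ∈ ℝ × ℝ^m. -/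
open Set Function MeasureTheory

noncomputable section

/-- A map on `ℝ × ℝ^m` (coordinates `(θ, y)`) is `ℤ^{1+m}`-periodic if it is invariant
under all integer translations; such maps correspond to objects on the torus
`𝕋^{1+m} = (ℝ/ℤ) × (ℝ^m/ℤ^m)`. -/
def ZPeriodicProd {m : ℕ} {α : Type*} (f : ℝ × (Fin m → ℝ) → α) : Prop :=
  ∀ (a : ℤ) (k : Fin m → ℤ) (θ : ℝ) (y : Fin m → ℝ),
    f (θ + a, y + fun i => (k i : ℝ)) = f (θ, y)

section Aux
open Metric ContinuousLinearMap Real Submodule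
open scoped ContDiff

private lemma arith1 (X D2 K A : ℝ) (hXD : X * D2 = A) (hA : A ≤ -K) (hD2 : D2 ≤ 4)
    (hD20 : 0 < D2) (hK : 0 < K) : X ≤ -(K/4) := by nlinarith

private lemma deriv_identity (p r s c Dv : ℝ) (hs : s^2 + c^2 = 1) (hD : Dv = 1 - r*c)
    (h0 : Dv ≠ 0) :
    p*r*(c - r)/Dv^2 = (r * (c * p) * Dv - r * s * -(r * (-s * p))) / Dv^2 := by
  subst hD
  rw [div_eq_div_iff (by positivity) (by positivity)]
  linear_combination (p*r^2*(1 - r*c)^2)*hs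

lemma exists_phi {δ : ℝ} (hδ0 : 0 < δ) (hδ : δ < 1/2) :
    ∃ φ dφ : ℝ → ℝ, ∃ c₁ : ℝ, 0 < c₁ ∧ ContDiff ℝ (⊤ : ℕ∞) φ ∧ Function.Periodic φ 1 ∧
      (∀ t, HasDerivAt φ (dφ t) t) ∧
      (∀ t : ℝ, |dφ t| < c₁ → |t - round t| ≤ δ) := by
  have hπ := Real.pi_pos
  have h2δ : 2 * π * δ < π := by nlinarith
  have h2δ0 : 0 < 2 * π * δ := by positivity
  have hcos1 : Real.cos (2*π*δ) < 1 := by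
    have := Real.cos_lt_cos_of_nonneg_of_le_pi (le_refl 0) h2δ.le h2δ0
    simpa using this
  have hcosm1 : -1 < Real.cos (2*π*δ) := by
    have := Real.cos_lt_cos_of_nonneg_of_le_pi (by positivity) (le_refl π) h2δ
    simpa using this
  set ρ : ℝ := (1 + Real.cos (2*π*δ))/2 with hρ
  set γ : ℝ := (1 - Real.cos (2*π*δ))/2 with hγ
  have hρ0 : 0 < ρ := by rw [hρ]; linarith
  have hρ1 : ρ < 1 := by rw [hρ]; linarith
  have hγ0 : 0 < γ := by rw [hγ]; linarith
  have hργ : ρ - Real.cos (2*π*δ) = γ := by rw [hρ, hγ]; ring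
  set D : ℝ → ℝ := fun t => 1 - ρ * Real.cos (2*π*t) with hD
  have hD0 : ∀ t, 0 < D t := by
    intro t
    have h1 : Real.cos (2*π*t) ≤ 1 := Real.cos_le_one _
    have h2 : -1 ≤ Real.cos (2*π*t) := Real.neg_one_le_cos _
    show (0:ℝ) < 1 - ρ * Real.cos (2*π*t)
    nlinarith
  have hD2 : ∀ t, D t ≤ 2 := by
    intro t
    have h2 : -1 ≤ Real.cos (2*π*t) := Real.neg_one_le_cos _
    show 1 - ρ * Real.cos (2*π*t) ≤ 2
    nlinarith
  set φ : ℝ → ℝ := fun t => ρ * Real.sin (2*π*t) / D t with hφ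
  set dφ : ℝ → ℝ := fun t => 2*π*ρ*(Real.cos (2*π*t) - ρ) / (D t)^2 with hdφ
  have hlin : ∀ t : ℝ, HasDerivAt (fun s : ℝ => 2*π*s) (2*π) t := by
    intro t
    simpa using (hasDerivAt_id t).const_mul (2*π)
  have hder : ∀ t, HasDerivAt φ (dφ t) t := by
    intro t
    have hsin : HasDerivAt (fun s : ℝ => ρ * Real.sin (2*π*s))
        (ρ * (Real.cos (2*π*t) * (2*π))) t :=
      ((Real.hasDerivAt_sin (2*π*t)).comp t (hlin t)).const_mul ρ
    have hcosd : HasDerivAt D (-(ρ * (-Real.sin (2*π*t) * (2*π)))) t := by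
      have := ((Real.hasDerivAt_cos (2*π*t)).comp t (hlin t)).const_mul ρ
      exact this.const_sub 1
    have hdiv := hsin.div hcosd (ne_of_gt (hD0 t))
    have hkey := deriv_identity (2*π) ρ (Real.sin (2*π*t)) (Real.cos (2*π*t)) (D t)
      (Real.sin_sq_add_cos_sq (2*π*t)) rfl (ne_of_gt (hD0 t))
    rw [show dφ t = 2*π*ρ*(Real.cos (2*π*t) - ρ)/(D t)^2 from rfl, hkey]
    exact hdiv
  refine ⟨φ, dφ, 2*π*ρ*γ/4, by positivity, ?_, ?_, hder, ?_⟩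
  · exact (contDiff_const.mul (Real.contDiff_sin.comp
      (contDiff_const.mul contDiff_id))).div
      ((contDiff_const.sub (contDiff_const.mul (Real.contDiff_cos.comp
        (contDiff_const.mul contDiff_id))))) (fun t => ne_of_gt (hD0 t))
  · intro t
    have h1 : 2*π*(t+1) = 2*π*t + 2*π := by ring
    simp only [hφ, hD, h1, Real.sin_add_two_pi, Real.cos_add_two_pi]
  · intro t hsmall
    by_contra hfar
    push_neg at hfar
    set w : ℝ := t - round t with hw
    have hw12 : |w| ≤ 1/2 := abs_sub_round t
    have hcoseq : Real.cos (2*π*t) = Real.cos (2*π*w) := by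
      have : 2*π*t = 2*π*w + (round t) * (2*π) := by rw [hw]; ring
      rw [this, Real.cos_add_int_mul_two_pi]
    have hcosw : Real.cos (2*π*w) = Real.cos (2*π*|w|) := by
      rcases abs_cases w with ⟨h, _⟩ | ⟨h, _⟩
      · rw [h]
      · rw [h]; rw [show 2*π*(-w) = -(2*π*w) by ring, Real.cos_neg]
    have hmono : Real.cos (2*π*|w|) ≤ Real.cos (2*π*δ) := by
      apply Real.cos_le_cos_of_nonneg_of_le_pi h2δ0.le
      · nlinarith [hw12]
      · nlinarith [hfar]
    have hnum : ρ - Real.cos (2*π*t) ≥ γ := by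
      rw [hcoseq, hcosw]; linarith [hmono, hργ]
    have hDsq : (D t)^2 ≤ 4 := by nlinarith [hD0 t, hD2 t]
    have hDsq0 : 0 < (D t)^2 := pow_pos (hD0 t) 2
    have hK0 : 0 < 2*π*ρ*γ := by positivity
    have hA := mul_le_mul_of_nonneg_left
      (show Real.cos (2*π*t) - ρ ≤ -γ by linarith) (by positivity : (0:ℝ) ≤ 2*π*ρ)
    have hXD : dφ t * (D t)^2 = 2*π*ρ*(Real.cos (2*π*t) - ρ) := by
      rw [show dφ t = 2*π*ρ*(Real.cos (2*π*t) - ρ)/(D t)^2 from rfl,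
        div_mul_cancel₀ _ (ne_of_gt hDsq0)]
    have hval : dφ t ≤ -(2*π*ρ*γ/4) := by
      have := arith1 (dφ t) ((D t)^2) (2*π*ρ*γ) _ hXD (by linarith [hA]) hDsq hDsq0 hK0
      linarith
    have habs : 2*π*ρ*γ/4 ≤ |dφ t| := le_abs.2 (Or.inr (by linarith))
    linarith


lemma exists_trig_approx (g : ℝ → ℝ) (hg : Continuous g) (hper : Function.Periodic g 1)
    {ε : ℝ} (hε : 0 < ε) :
    ∃ u Q : ℝ → ℝ, ∃ γ : ℝ, ContDiff ℝ (⊤ : ℕ∞) u ∧ Function.Periodic u 1 ∧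
      (∀ t, HasDerivAt u (Q t - γ) t) ∧ (∀ t, |Q t - g t| ≤ ε) ∧
      |γ - ∫ t in (0:ℝ)..1, g t| ≤ ε := by
  haveI : Fact ((0:ℝ) < 1) := ⟨one_pos⟩
  have hlift : Continuous (fun x : AddCircle (1:ℝ) => (hper.lift x : ℂ)) := by
    apply Complex.continuous_ofReal.comp
    exact continuous_coinduced_dom.mpr hg
  set G : C(AddCircle (1:ℝ), ℂ) := ⟨_, hlift⟩ with hG
  have hmem : G ∈ closure ((span ℂ (range <| @fourier 1)) : Set C(AddCircle (1:ℝ), ℂ)) := by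
    have : G ∈ (span ℂ (range <| @fourier 1)).topologicalClosure := by
      rw [span_fourier_closure_eq_top]; trivial
    exact this
  rw [Metric.mem_closure_iff] at hmem
  obtain ⟨Qc, hQmem, hQdist⟩ := hmem ε hε
  rw [SetLike.mem_coe, Finsupp.mem_span_range_iff_exists_finsupp] at hQmem
  obtain ⟨c, hc⟩ := hQmem
  set A : ℤ → ℂ := fun j => 2 * Real.pi * Complex.I * j with hA
  have hA0 : ∀ j : ℤ, j ≠ 0 → A j ≠ 0 := by
    intro j hj
    simp only [hA]
    refine mul_ne_zero (mul_ne_zero (mul_ne_zero two_ne_zero ?_) Complex.I_ne_zero) ?_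
    · exact_mod_cast Real.pi_ne_zero
    · exact_mod_cast hj
  set QC : ℝ → ℂ := fun t => ∑ j ∈ c.support, c j * Complex.exp (A j * t) with hQC
  set γC : ℂ := ∑ j ∈ c.support, if j = 0 then c j else 0 with hγC
  set uC : ℝ → ℂ := fun t =>
    ∑ j ∈ c.support, if j = 0 then 0 else c j * Complex.exp (A j * t) / A j with huC
  have hQc_apply : ∀ x : ℝ, Qc ((x : ℝ) : AddCircle (1:ℝ)) = QC x := by
    intro x
    rw [← hc]
    have : ((c.sum fun i a => a • fourier i : C(AddCircle (1:ℝ), ℂ))) (x : AddCircle (1:ℝ))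
        = ∑ j ∈ c.support, c j * (fourier j : C(AddCircle (1:ℝ), ℂ)) (x : AddCircle (1:ℝ)) := by
      rw [Finsupp.sum, ContinuousMap.coe_sum, Finset.sum_apply]
      simp [ContinuousMap.smul_apply, smul_eq_mul]
    rw [this]
    refine Finset.sum_congr rfl fun j hj => ?_
    rw [fourier_coe_apply]
    congr 1
    simp only [hA, Complex.ofReal_one, div_one]
  have hexp_per : ∀ (j : ℤ) (t : ℝ), Complex.exp (A j * ((t : ℂ) + 1)) = Complex.exp (A j * t) := by
    intro j t
    have : A j * ((t : ℂ) + 1) = A j * t + j * (2 * Real.pi * Complex.I) := by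
      simp only [hA]; ring
    rw [this, Complex.exp_add, Complex.exp_int_mul_two_pi_mul_I, mul_one]
  have hder : ∀ (j : ℤ) (t : ℝ),
      HasDerivAt (fun s : ℝ => Complex.exp (A j * s)) (A j * Complex.exp (A j * t)) t := by
    intro j t
    have h1 : HasDerivAt (fun s : ℝ => ((s : ℂ))) 1 t := by
      simpa using (hasDerivAt_id t).ofReal_comp
    have h3 := (h1.const_mul (A j)).cexp
    simpa [mul_comm] using h3
  -- the real objects
  set u : ℝ → ℝ := fun t => (uC t).re with hu
  set Q : ℝ → ℝ := fun t => (QC t).re with hQ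
  set γ : ℝ := γC.re with hγ
  -- smoothness
  have hsmooth : ContDiff ℝ (⊤ : ℕ∞) u := by
    apply Complex.reCLM.contDiff.comp
    apply ContDiff.sum
    intro j hj
    by_cases h : j = 0
    · simp only [h, if_pos rfl]
      exact contDiff_const
    · simp only [h, if_false]
      exact (contDiff_const.mul (Complex.contDiff_exp.comp
        (contDiff_const.mul Complex.ofRealCLM.contDiff))).div_const _
  -- periodicity
  have hperu : Function.Periodic u 1 := by
    intro t
    have huCper : uC (t + 1) = uC t := by
      refine Finset.sum_congr rfl fun j hj => ?_
      by_cases h : j = 0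
      · simp [h]
      · simp only [h, if_false]
        rw [show (((t + 1 : ℝ)) : ℂ) = (t : ℂ) + 1 by push_cast; ring, hexp_per]
    simp only [hu, huCper]
  -- derivative
  have hud : ∀ t, HasDerivAt u (Q t - γ) t := by
    intro t
    have hsum : HasDerivAt uC (∑ j ∈ c.support,
        (c j * Complex.exp (A j * t) - if j = 0 then c j else 0)) t := by
      apply HasDerivAt.fun_sum
      intro j hj
      by_cases h : j = 0
      · subst h
        simp only [↓reduceIte]
        have h0 : c (0:ℤ) * Complex.exp (A 0 * (t : ℂ)) - c 0 = 0 := by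
          simp [hA]
        rw [h0]
        exact hasDerivAt_const t 0
      · simp only [h, if_false]
        have hd := ((hder j t).const_mul (c j)).div_const (A j)
        have heq : c j * (A j * Complex.exp (A j * t)) / A j
            = c j * Complex.exp (A j * t) := by
          rw [mul_comm (A j) (Complex.exp _), ← mul_assoc, mul_div_assoc,
            div_self (hA0 j h), mul_one]
        rw [heq] at hd
        simpa using hd
    have hsum2 : (∑ j ∈ c.support, (c j * Complex.exp (A j * t) - if j = 0 then c j else 0))
        = QC t - γC := by
      rw [Finset.sum_sub_distrib]
    rw [hsum2] at hsum
    have := Complex.reCLM.hasFDerivAt.comp_hasDerivAt t hsum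
    simp [Complex.sub_re] at this
    exact this
  -- approximation
  have happrox : ∀ t, |Q t - g t| ≤ ε := by
    intro t
    have h1 : (G (t : AddCircle (1:ℝ)) : ℂ) = (g t : ℂ) := by
      simp [hG, hper.lift_coe]
    have h2 : dist (Qc (t : AddCircle (1:ℝ))) (G (t : AddCircle (1:ℝ))) ≤ dist Qc G :=
      ContinuousMap.dist_apply_le_dist _
    have h3 : |(QC t).re - g t| ≤ ‖QC t - (g t : ℂ)‖ := by
      have := Complex.abs_re_le_norm (QC t - (g t : ℂ))
      simpa [Complex.sub_re] using this
    calc |Q t - g t| ≤ ‖QC t - (g t : ℂ)‖ := h3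
      _ = dist (Qc (t : AddCircle (1:ℝ))) (G (t : AddCircle (1:ℝ))) := by
          rw [hQc_apply t, h1, Complex.dist_eq]
      _ ≤ dist Qc G := h2
      _ = dist G Qc := dist_comm _ _
      _ ≤ ε := hQdist.le
  -- mean value
  have hQcont : Continuous Q := by
    apply Complex.continuous_re.comp
    apply continuous_finset_sum
    intro j hj
    exact continuous_const.mul (Complex.continuous_exp.comp
      (continuous_const.mul Complex.continuous_ofReal))
  have hmean : γ = ∫ t in (0:ℝ)..1, Q t := by
    have hftc : ∫ t in (0:ℝ)..1, (Q t - γ) = u 1 - u 0 :=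
      intervalIntegral.integral_eq_sub_of_hasDerivAt (fun t _ => hud t)
        ((hQcont.sub continuous_const).intervalIntegrable 0 1)
    have hu10 : u 1 = u 0 := by simpa using hperu 0
    rw [hu10, sub_self] at hftc
    rw [intervalIntegral.integral_sub (hQcont.intervalIntegrable 0 1)
      (intervalIntegrable_const)] at hftc
    simp only [intervalIntegral.integral_const, sub_zero, one_smul, smul_eq_mul] at hftc
    linarith [hftc]
  refine ⟨u, Q, γ, hsmooth, hperu, hud, happrox, ?_⟩
  rw [hmean, ← intervalIntegral.integral_sub (hQcont.intervalIntegrable 0 1)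
    (hg.intervalIntegrable 0 1)]
  have := intervalIntegral.norm_integral_le_of_norm_le_const (C := ε) (a := (0:ℝ)) (b := 1)
    (f := fun t => Q t - g t) (fun t _ => by simpa [Real.norm_eq_abs] using happrox t)
  simpa [Real.norm_eq_abs] using this


end Aux

/-- Let `p = (π, r)` be a continuous `ℤ^{1+m}`-periodic 1-form
`π dθ + Σ r_i dy_i` on the torus `𝕋^{1+m}`. If for some `y₀` the average
`P(y₀) = ∫_0^1 π(θ, y₀) dθ` is nonzero, then there is a smooth `ℤ^{1+m}`-periodic
function `f` such that `p(θ,y) − ∇f(θ,y)` never vanishes. -/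
theorem nonzero_average_form_shifted_off_zero
    (m : ℕ) (p : ℝ × (Fin m → ℝ) → ℝ × (Fin m → ℝ))
    (hp : Continuous p) (hper : ZPeriodicProd p)
    (hP : ∃ y₀ : Fin m → ℝ, (∫ θ in (0:ℝ)..1, (p (θ, y₀)).1) ≠ 0) :
    ∃ f : ℝ × (Fin m → ℝ) → ℝ, ContDiff ℝ (⊤ : ℕ∞) f ∧ ZPeriodicProd f ∧
      ∀ (θ : ℝ) (y : Fin m → ℝ),
        ((p (θ, y)).1 - fderiv ℝ f (θ, y) (1, 0),
         fun i => (p (θ, y)).2 i - fderiv ℝ f (θ, y) (0, Pi.single i 1))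
        ≠ (0 : ℝ × (Fin m → ℝ)) := by
  obtain ⟨y₀, hc₀⟩ := hP
  set g : ℝ → ℝ := fun θ => (p (θ, y₀)).1 with hg
  set c₀ : ℝ := ∫ θ in (0:ℝ)..1, g θ with hc₀def
  set ε : ℝ := |c₀|/4 with hε
  have hc₀pos : 0 < |c₀| := abs_pos.2 hc₀
  have hεpos : 0 < ε := by rw [hε]; linarith
  have key : ∀ {α : Type} (q : ℝ × (Fin m → ℝ) → α), ZPeriodicProd q →
      ∀ (a : ℤ) (k : Fin m → ℤ) (θ' : ℝ) (y' : Fin m → ℝ) (θ : ℝ) (y : Fin m → ℝ),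
      θ' + a = θ → (∀ i, y' i + k i = y i) → q (θ, y) = q (θ', y') := by
    intro α q hq a k θ' y' θ y hθ hy
    rw [← hq a k θ' y']
    congr 1
    rw [Prod.mk.injEq]
    refine ⟨hθ.symm, ?_⟩
    funext i
    rw [Pi.add_apply]
    exact (hy i).symm
  -- reduction of the first coordinate by periodicity
  have hshift : ∀ (θ : ℝ) (y : Fin m → ℝ), p (θ, y) = p (Int.fract θ, y) :=
    fun θ y => key p hper ⌊θ⌋ 0 (Int.fract θ) y θ y (Int.fract_add_floor _)
      (fun i => by simp)
  -- reduction of all coordinates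
  have hshift2 : ∀ (θ : ℝ) (y : Fin m → ℝ),
      p (θ, y) = p (Int.fract θ, fun i => Int.fract (y i)) :=
    fun θ y => key p hper ⌊θ⌋ (fun i => ⌊y i⌋) (Int.fract θ) (fun i => Int.fract (y i)) θ y
      (Int.fract_add_floor _) (fun i => Int.fract_add_floor _)
  have hgc : Continuous g := continuous_fst.comp (hp.comp (continuous_id.prodMk continuous_const))
  have hgper : Function.Periodic g 1 := by
    intro θ
    show (p (θ + 1, y₀)).1 = (p (θ, y₀)).1
    rw [key p hper 1 0 θ y₀ (θ + 1) y₀ (by push_cast; ring) (fun i => by simp)]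
  -- uniform continuity near y₀
  have hUC : ∃ δ : ℝ, 0 < δ ∧ δ < 1/2 ∧ ∀ (θ : ℝ) (s : Fin m → ℝ), ‖s‖ ≤ δ →
      |(p (θ, y₀ + s)).1 - (p (θ, y₀)).1| ≤ ε := by
    have hKc : IsCompact ((Icc (0:ℝ) 1) ×ˢ (Metric.closedBall y₀ 1)) :=
      isCompact_Icc.prod (isCompact_closedBall _ _)
    have huc := hKc.uniformContinuousOn_of_continuous hp.continuousOn
    rw [Metric.uniformContinuousOn_iff] at huc
    obtain ⟨δ', hδ'0, hac⟩ := huc ε hεpos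
    refine ⟨min (δ'/2) (1/4), by positivity, ?_, ?_⟩
    · calc min (δ'/2) (1/4) ≤ 1/4 := min_le_right _ _
        _ < 1/2 := by norm_num
    intro θ s hsle
    have hs1 : ‖s‖ ≤ 1 := by
      calc ‖s‖ ≤ 1/4 := hsle.trans (min_le_right _ _)
        _ ≤ 1 := by norm_num
    have hsδ : ‖s‖ < δ' := by
      calc ‖s‖ ≤ δ'/2 := hsle.trans (min_le_left _ _)
        _ < δ' := by linarith
    rw [hshift θ (y₀ + s), hshift θ y₀]
    have hfmem : Int.fract θ ∈ Icc (0:ℝ) 1 := ⟨Int.fract_nonneg θ, (Int.fract_lt_one θ).le⟩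
    have hdys : dist (y₀ + s) y₀ = ‖s‖ := by rw [dist_eq_norm, add_sub_cancel_left]
    have hmem1 : (Int.fract θ, y₀ + s) ∈ (Icc (0:ℝ) 1) ×ˢ (Metric.closedBall y₀ 1) :=
      ⟨hfmem, by rw [Metric.mem_closedBall, hdys]; exact hs1⟩
    have hmem2 : (Int.fract θ, y₀) ∈ (Icc (0:ℝ) 1) ×ˢ (Metric.closedBall y₀ 1) :=
      ⟨hfmem, Metric.mem_closedBall_self zero_le_one⟩
    have hd : dist ((Int.fract θ, y₀ + s) : ℝ × (Fin m → ℝ)) (Int.fract θ, y₀) < δ' := by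
      rw [Prod.dist_eq]
      apply max_lt (by simpa using hδ'0)
      rw [hdys]; exact hsδ
    have hpp := hac _ hmem1 _ hmem2 hd
    have hfst : |(p (Int.fract θ, y₀ + s)).1 - (p (Int.fract θ, y₀)).1|
        ≤ dist (p (Int.fract θ, y₀ + s)) (p (Int.fract θ, y₀)) := by
      rw [← Real.dist_eq]
      rw [Prod.dist_eq]
      exact le_max_left _ _
    linarith
  obtain ⟨δ, hδ0, hδhalf, hUC⟩ := hUC
  -- global bound on the second component
  have hCr : ∃ C : ℝ, 0 ≤ C ∧ ∀ (θ : ℝ) (y : Fin m → ℝ) (i : Fin m), |(p (θ, y)).2 i| ≤ C := by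
    have hKc : IsCompact ((Icc (0:ℝ) 1) ×ˢ (Icc (0 : Fin m → ℝ) 1)) :=
      isCompact_Icc.prod isCompact_Icc
    obtain ⟨C, hC⟩ := hKc.exists_bound_of_continuousOn hp.continuousOn
    refine ⟨max C 0, le_max_right _ _, ?_⟩
    intro θ y i
    rw [hshift2 θ y]
    have hmem : (Int.fract θ, fun j => Int.fract (y j)) ∈
        (Icc (0:ℝ) 1) ×ˢ (Icc (0 : Fin m → ℝ) 1) := by
      refine ⟨⟨Int.fract_nonneg θ, (Int.fract_lt_one θ).le⟩, ?_, ?_⟩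
      · intro j; exact Int.fract_nonneg (y j)
      · intro j; exact (Int.fract_lt_one (y j)).le
    have h1 := hC _ hmem
    set z := p (Int.fract θ, fun j => Int.fract (y j)) with hz
    calc |z.2 i| ≤ ‖z.2‖ := by rw [← Real.norm_eq_abs]; exact norm_le_pi_norm _ i
      _ ≤ ‖z‖ := norm_snd_le _
      _ ≤ C := h1
      _ ≤ max C 0 := le_max_left _ _
  obtain ⟨C, hC0, hCr⟩ := hCr
  obtain ⟨φ, dφ, c₁, hc₁, hφsmooth, hφper, hφder, hφquant⟩ := exists_phi hδ0 hδhalf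
  obtain ⟨u, Q, γ, husmooth, huper, hud, hQapprox, hγ⟩ := exists_trig_approx g hgc hgper hεpos
  set N : ℝ := (C+1)/c₁ with hN
  have hN0 : 0 < N := by positivity
  set f : ℝ × (Fin m → ℝ) → ℝ :=
    fun q => u q.1 + N * ∑ i : Fin m, φ (q.2 i - y₀ i) with hf
  -- derivative of f
  have hFD : ∀ (θ : ℝ) (y : Fin m → ℝ),
      fderiv ℝ f (θ, y) (1, (0 : Fin m → ℝ)) = Q θ - γ ∧
      ∀ i, fderiv ℝ f (θ, y) (0, Pi.single i 1) = N * dφ (y i - y₀ i) := by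
    intro θ y
    have h1 : HasFDerivAt (fun q : ℝ × (Fin m → ℝ) => u q.1)
        ((Q θ - γ) • ContinuousLinearMap.fst ℝ ℝ (Fin m → ℝ)) (θ, y) :=
      (hud θ).comp_hasFDerivAt (θ, y) hasFDerivAt_fst
    have h2 : ∀ i : Fin m, HasFDerivAt (fun q : ℝ × (Fin m → ℝ) => φ (q.2 i - y₀ i))
        (dφ (y i - y₀ i) • ((ContinuousLinearMap.proj i).comp
          (ContinuousLinearMap.snd ℝ ℝ (Fin m → ℝ)))) (θ, y) := by
      intro i
      have hin : HasFDerivAt (fun q : ℝ × (Fin m → ℝ) => q.2 i - y₀ i)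
          ((ContinuousLinearMap.proj (R := ℝ) (φ := fun _ : Fin m => ℝ) i).comp
            (ContinuousLinearMap.snd ℝ ℝ (Fin m → ℝ))) (θ, y) := by
        have := ((ContinuousLinearMap.proj (R := ℝ) (φ := fun _ : Fin m => ℝ) i).comp
          (ContinuousLinearMap.snd ℝ ℝ (Fin m → ℝ))).hasFDerivAt (x := (θ, y))
        simpa using this.sub_const (y₀ i)
      exact (hφder (y i - y₀ i)).comp_hasFDerivAt (θ, y) hin
    have h3 : HasFDerivAt f ((Q θ - γ) • ContinuousLinearMap.fst ℝ ℝ (Fin m → ℝ)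
        + N • ∑ i : Fin m, dφ (y i - y₀ i) • ((ContinuousLinearMap.proj i).comp
          (ContinuousLinearMap.snd ℝ ℝ (Fin m → ℝ)))) (θ, y) :=
      h1.add ((HasFDerivAt.fun_sum (fun i _ => h2 i)).const_mul N)
    rw [h3.fderiv]
    constructor
    · simp
    · intro i
      simp [ContinuousLinearMap.proj_apply, Pi.single_apply, mul_ite,
        Finset.sum_ite_eq', mul_comm]
  refine ⟨f, ?_, ?_, ?_⟩
  · -- smoothness
    apply ContDiff.add
    · exact husmooth.comp contDiff_fst
    · apply ContDiff.mul contDiff_const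
      apply ContDiff.sum
      intro i _
      exact hφsmooth.comp ((contDiff_pi.1 contDiff_snd i).sub contDiff_const)
  · -- periodicity
    intro a k θ y
    show u (θ + a) + N * ∑ i : Fin m, φ ((y + fun j => ((k j : ℝ))) i - y₀ i)
        = u θ + N * ∑ i : Fin m, φ (y i - y₀ i)
    congr 1
    · simpa using (huper.int_mul a) θ
    · congr 1
      apply Finset.sum_congr rfl
      intro i _
      have hh : (y + fun j => ((k j : ℝ))) i - y₀ i = (y i - y₀ i) + (k i : ℝ) * 1 := by
        rw [Pi.add_apply]; ring
      rw [hh, (hφper.int_mul (k i)) _]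
  · -- no zeros
    intro θ y hcontra
    have hA := congrArg Prod.fst hcontra
    have hB := congrArg Prod.snd hcontra
    simp only [Prod.fst_zero] at hA
    simp only [Prod.snd_zero] at hB
    obtain ⟨hF1, hF2⟩ := hFD θ y
    rw [hF1] at hA
    -- second components vanish
    have hB' : ∀ i, (p (θ, y)).2 i = N * dφ (y i - y₀ i) := by
      intro i
      have h := congrFun hB i
      rw [hF2 i] at h
      rw [Pi.zero_apply, sub_eq_zero] at h
      exact h
    have hclose : ∀ i, |(y i - y₀ i) - round (y i - y₀ i)| ≤ δ := by
      intro i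
      apply hφquant
      have h1 : |(p (θ, y)).2 i| ≤ C := hCr θ y i
      have h2 : |N * dφ (y i - y₀ i)| ≤ C := by rw [← hB' i]; exact h1
      rw [abs_mul, abs_of_pos hN0] at h2
      rw [← mul_lt_mul_iff_right₀ hN0]
      calc N * |dφ (y i - y₀ i)| ≤ C := h2
        _ < C + 1 := by linarith
        _ = N * c₁ := by rw [hN]; field_simp
    set k : Fin m → ℤ := fun i => round (y i - y₀ i) with hk
    set s : Fin m → ℝ := fun i => y i - y₀ i - k i with hs
    have hsnorm : ‖s‖ ≤ δ := by
      rw [pi_norm_le_iff_of_nonneg hδ0.le]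
      intro i
      rw [Real.norm_eq_abs]
      exact hclose i
    have hyshift : p (θ, y) = p (θ, y₀ + s) := by
      have h := hper 0 k θ (y₀ + s)
      simp only [Int.cast_zero, add_zero] at h
      rw [← h]
      congr 2
      funext i
      simp only [hs, Pi.add_apply]
      ring
    have e1 : |(p (θ, y₀ + s)).1 - (p (θ, y₀)).1| ≤ ε := hUC θ s hsnorm
    have e2 : |Q θ - g θ| ≤ ε := hQapprox θ
    have e3 : |γ - c₀| ≤ ε := hγ
    have e4 : (p (θ, y₀ + s)).1 = Q θ - γ := by
      rw [← hyshift]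
      rw [sub_eq_zero] at hA
      exact hA
    have h6 : c₀ = (Q θ - (p (θ, y₀)).1) - ((p (θ, y₀ + s)).1 - (p (θ, y₀)).1) - (γ - c₀) := by
      rw [e4]; ring
    have h7 : |c₀| ≤ ε + ε + ε := by
      rw [h6]
      calc |(Q θ - (p (θ, y₀)).1) - ((p (θ, y₀ + s)).1 - (p (θ, y₀)).1) - (γ - c₀)|
          ≤ |(Q θ - (p (θ, y₀)).1) - ((p (θ, y₀ + s)).1 - (p (θ, y₀)).1)| + |γ - c₀| :=
            abs_sub _ _
        _ ≤ |Q θ - (p (θ, y₀)).1| + |(p (θ, y₀ + s)).1 - (p (θ, y₀)).1| + |γ - c₀| := by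
            have := abs_sub (Q θ - (p (θ, y₀)).1) ((p (θ, y₀ + s)).1 - (p (θ, y₀)).1)
            linarith
        _ ≤ ε + ε + ε := by
            have hgθ : g θ = (p (θ, y₀)).1 := rfl
            rw [← hgθ]
            exact add_le_add (add_le_add e2 e1) e3
    rw [hε] at h7
    linarith
end
end

section
/- Let n ≥ 1 and let α : ℝ^n → ℝ^n be a continuous ℤ^n-periodic map, viewed as a continuous 1-form on the torus 𝕋^n, and let e_1 = (1,0,…,0). For a smooth ℤ^n-periodic vector field Z : ℝ^n → ℝ^n, say that ι_Z dα = 0 in the sense of distributions if for every smooth compactly supported φ : ℝ^n → ℝ and every index j, ∫_{ℝ^n} Σ_i [ α_i ∂_j(Z_i φ) − α_j ∂_i(Z_i φ) ] dx = 0. Assume there exists δ > 0 such that ι_Z dα = 0 in the sense of distributions for every smooth ℤ^n-periodic vector field Z with sup_x ‖Z(x) − e_1‖ + sup_x ‖DZ(x)‖ < δ. Then dα = 0 in the sense of distributions, i.e. for every smooth compactly supported φ and all indices i, j, ∫_{ℝ^n} (α_j ∂_i φ − α_i ∂_j φ) dx = 0. -/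
open Set Function MeasureTheory

noncomputable section

/-- A map on `ℝ^n` is `ℤ^n`-periodic if it is invariant under all integer translations;
such maps correspond to objects on the torus `𝕋^n = ℝ^n/ℤ^n`. -/
def ZPeriodic {n : ℕ} {α : Type*} (f : (Fin n → ℝ) → α) : Prop :=
  ∀ (k : Fin n → ℤ) (x : Fin n → ℝ), f (x + fun i => (k i : ℝ)) = f x

/-- A continuous map `p : ℝ^n → ℝ^n`, viewed as the 1-form `Σ_i p_i dx_i`, is closed in
the sense of distributions if `∫ (p_j ∂_i φ − p_i ∂_j φ) = 0` for every smooth compactly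
supported test function `φ` and all indices `i, j`. -/
def IsDistribClosed {n : ℕ} (p : (Fin n → ℝ) → (Fin n → ℝ)) : Prop :=
  ∀ φ : (Fin n → ℝ) → ℝ, ContDiff ℝ (⊤ : ℕ∞) φ → HasCompactSupport φ →
    ∀ i j : Fin n,
      ∫ x : Fin n → ℝ,
        (p x j * fderiv ℝ φ x (Pi.single i 1) - p x i * fderiv ℝ φ x (Pi.single j 1)) = 0

/-- Let `α : ℝ^n → ℝ^n` (`n ≥ 1`) be a continuous `ℤ^n`-periodic 1-form
on `𝕋^n` and `e₁` the first coordinate vector. If there is `δ > 0` such that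
`ι_Z dα = 0` in the sense of distributions (i.e. for every smooth compactly supported
`φ` and every `j`, `∫ Σ_i [α_i ∂_j(Z_i φ) − α_j ∂_i(Z_i φ)] = 0`) for every smooth
`ℤ^n`-periodic vector field `Z` with `sup ‖Z − e₁‖ + sup ‖DZ‖ < δ`, then `dα = 0` in
the sense of distributions. -/
theorem closed_of_contraction_vanishing_near_e1
    (n : ℕ) (hn : 1 ≤ n) (α : (Fin n → ℝ) → (Fin n → ℝ))
    (hα : Continuous α) (hper : ZPeriodic α)
    (δ : ℝ) (hδ : 0 < δ)
    (hmain : ∀ Z : (Fin n → ℝ) → (Fin n → ℝ), ContDiff ℝ (⊤ : ℕ∞) Z → ZPeriodic Z →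
      (∃ C₁ C₂ : ℝ, C₁ + C₂ < δ ∧
        (∀ x, ‖Z x - (Pi.single (⟨0, hn⟩ : Fin n) 1 : Fin n → ℝ)‖ ≤ C₁) ∧
        (∀ x, ‖fderiv ℝ Z x‖ ≤ C₂)) →
      ∀ φ : (Fin n → ℝ) → ℝ, ContDiff ℝ (⊤ : ℕ∞) φ → HasCompactSupport φ →
        ∀ j : Fin n,
          ∫ x : Fin n → ℝ,
            (∑ i, (α x i * fderiv ℝ (fun y => Z y i * φ y) x (Pi.single j 1)
                 - α x j * fderiv ℝ (fun y => Z y i * φ y) x (Pi.single i 1))) = 0) :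
    IsDistribClosed α := by
  intro φ hφ hφc i j
  set e₀ : Fin n → ℝ := Pi.single (⟨0, hn⟩ : Fin n) 1 with he₀
  -- B m : the basic integrand
  set B : Fin n → (Fin n → ℝ) → ℝ := fun m x =>
    α x m * fderiv ℝ φ x (Pi.single j 1) - α x j * fderiv ℝ φ x (Pi.single m 1) with hB
  have hDcont : ∀ v : Fin n → ℝ, Continuous (fun x => fderiv ℝ φ x v) :=
    fun v => (hφ.continuous_fderiv (by simp)).clm_apply continuous_const
  have hBint : ∀ m, Integrable (B m) := by
    intro m
    have h1 : ∀ (a b : Fin n), Integrable (fun x => α x a * fderiv ℝ φ x (Pi.single b 1)) := by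
      intro a b
      refine Continuous.integrable_of_hasCompactSupport
        (((continuous_apply a).comp hα).mul (hDcont _)) ?_
      exact (hφc.fderiv_apply ℝ (Pi.single b 1)).mul_left
    exact (h1 m j).sub (h1 j m)
  -- key: for every constant vector field c close to e₀, ∑ m, c m * ∫ B m = 0
  have key : ∀ c : Fin n → ℝ, ‖c - e₀‖ ≤ δ / 2 → (∑ m, c m * ∫ x, B m x) = 0 := by
    intro c hc
    have hZ := hmain (fun _ => c) contDiff_const (fun k x => rfl)
      ⟨δ / 2, δ / 4, by linarith, fun x => hc, fun x => by
        simp [fderiv_const]; positivity⟩ φ hφ hφc j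
    have heq : ∀ x : Fin n → ℝ,
        (∑ m, (α x m * fderiv ℝ (fun y => c m * φ y) x (Pi.single j 1)
             - α x j * fderiv ℝ (fun y => c m * φ y) x (Pi.single m 1)))
        = ∑ m, c m * B m x := by
      intro x
      refine Finset.sum_congr rfl fun m _ => ?_
      rw [fderiv_const_mul (hφ.differentiable (by simp) x)]
      simp [hB]; ring
    rw [show (∫ x : Fin n → ℝ,
        (∑ m, (α x m * fderiv ℝ (fun y => c m * φ y) x (Pi.single j 1)
             - α x j * fderiv ℝ (fun y => c m * φ y) x (Pi.single m 1))))
        = ∫ x : Fin n → ℝ, ∑ m, c m * B m x from integral_congr_ae (.of_forall heq)] at hZ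
    rw [integral_finset_sum _ fun m _ => (hBint m).const_mul (c m)] at hZ
    simpa [integral_const_mul] using hZ
  set J : Fin n → ℝ := fun m => ∫ x, B m x with hJ
  have hsingle : ∀ k : Fin n, (∑ m, (Pi.single k 1 : Fin n → ℝ) m * J m) = J k := by
    intro k
    simp [Pi.single_apply, ite_mul]
  have hJ0 : J ⟨0, hn⟩ = 0 := by
    have := key e₀ (by simp [he₀]; positivity)
    rw [← hsingle ⟨0, hn⟩]
    simpa [he₀] using this
  have hJi : J i = 0 := by
    set c : Fin n → ℝ := fun m => e₀ m + (δ / 2) * (Pi.single i 1 : Fin n → ℝ) m with hc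
    have hnorm : ‖c - e₀‖ ≤ δ / 2 := by
      rw [pi_norm_le_iff_of_nonneg (by positivity)]
      intro m
      rcases eq_or_ne m i with h | h
      · simp [hc, Pi.single_apply, h, Real.norm_eq_abs, abs_of_pos hδ]
      · simp [hc, Pi.single_apply, h]
        positivity
    have hk := key c hnorm
    have hsum : (∑ m, c m * J m)
        = (∑ m, (Pi.single (⟨0, hn⟩ : Fin n) 1 : Fin n → ℝ) m * J m)
          + (δ / 2) * ∑ m, (Pi.single i 1 : Fin n → ℝ) m * J m := by
      simp [hc, he₀, add_mul, Finset.sum_add_distrib, Finset.mul_sum, mul_assoc]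
    rw [hsum, hsingle, hsingle, hJ0, zero_add] at hk
    have : (δ : ℝ) / 2 ≠ 0 := by positivity
    exact (mul_eq_zero.mp hk).resolve_left this
  have : (∫ x : Fin n → ℝ,
      (α x j * fderiv ℝ φ x (Pi.single i 1) - α x i * fderiv ℝ φ x (Pi.single j 1)))
      = - J i := by
    rw [hJ, ← integral_neg]
    refine integral_congr_ae (.of_forall fun x => ?_)
    simp only [hB]
    ring
  rw [this, hJi, neg_zero]
end
end

section
/- Let m ≥ 1 and let U ⊆ ℝ^m be a closed set invariant under all translations by vectors of ℤ^m (i.e. a closed subset of the torus 𝕋^m) with U ≠ ℝ^m. Then there exists a smooth ℤ^m-periodic function h : ℝ^m → ℝ such that ∇h(y) ≠ 0 for every y ∈ U; i.e. h, viewed as a smooth function on the torus 𝕋^m, has no critical point in U. Moreover, for any C > 0 one can choose h so that ‖∇h(y)‖ ≥ C for all y ∈ U. -/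
open Set Function MeasureTheory

noncomputable section

open Real in
/-- 1-D building block: derivative of `t ↦ A * sin (2πt) / (K - cos (2πt))`. -/
lemma aux_hasDerivAt (A K : ℝ) (hK : 1 < K) (t : ℝ) :
    HasDerivAt (fun t : ℝ => A * (Real.sin (2 * π * t) / (K - Real.cos (2 * π * t))))
      (A * (2 * π * (K * Real.cos (2 * π * t) - 1) / (K - Real.cos (2 * π * t)) ^ 2)) t := by
  have hden : ∀ u : ℝ, K - Real.cos u ≠ 0 := by
    intro u
    have := Real.neg_one_le_cos u
    have := Real.cos_le_one u
    intro h; nlinarith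
  have hlin : HasDerivAt (fun t : ℝ => 2 * π * t) (2 * π) t := by
    simpa using (hasDerivAt_id t).const_mul (2 * π)
  have hsin : HasDerivAt (fun t : ℝ => Real.sin (2 * π * t))
      (Real.cos (2 * π * t) * (2 * π)) t := (Real.hasDerivAt_sin _).comp t hlin
  have hcos : HasDerivAt (fun t : ℝ => Real.cos (2 * π * t))
      (-Real.sin (2 * π * t) * (2 * π)) t := (Real.hasDerivAt_cos _).comp t hlin
  have hKd : HasDerivAt (fun t : ℝ => K - Real.cos (2 * π * t))
      (Real.sin (2 * π * t) * (2 * π)) t := by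
    simpa [neg_mul] using hcos.const_sub K
  have hdiv := (hsin.div hKd (hden _)).const_mul A
  refine hdiv.congr_deriv ?_
  congr 1
  symm
  have hpy := Real.sin_sq_add_cos_sq (2 * π * t)
  rw [div_eq_div_iff (pow_ne_zero 2 (hden _)) (pow_ne_zero 2 (hden _))]
  linear_combination ((K - Real.cos (2 * π * t)) ^ 2 * (2 * π)) * hpy

open Real in
lemma aux_contDiff (A K : ℝ) (hK : 1 < K) :
    ContDiff ℝ (⊤ : ℕ∞) (fun t : ℝ => A * (Real.sin (2 * π * t) / (K - Real.cos (2 * π * t)))) := by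
  have hden : ∀ u : ℝ, K - Real.cos (2 * π * u) ≠ 0 := by
    intro u
    have := Real.neg_one_le_cos (2 * π * u)
    have := Real.cos_le_one (2 * π * u)
    intro h; nlinarith
  have hlin : ContDiff ℝ (⊤ : ℕ∞) (fun t : ℝ => 2 * π * t) := contDiff_const.mul contDiff_id
  exact contDiff_const.mul
    ((Real.contDiff_sin.comp hlin).div (contDiff_const.sub (Real.contDiff_cos.comp hlin)) hden)


set_option maxHeartbeats 1000000 in
open Real in
/-- Let `U` be a proper closed `ℤ^m`-invariant subset of `ℝ^m`
(i.e. a proper closed subset of the torus `𝕋^m`, `m ≥ 1`). Then for every `C > 0` there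
is a smooth `ℤ^m`-periodic function `h` whose gradient does not vanish on `U` and
in fact satisfies `‖∇h‖ ≥ C` on `U`. -/
theorem smooth_function_with_no_critical_point_in_proper_closed_set
    (m : ℕ) (hm : 1 ≤ m) (U : Set (Fin m → ℝ))
    (hUclosed : IsClosed U)
    (hUinv : ∀ (k : Fin m → ℤ) (y : Fin m → ℝ), y ∈ U → (y + fun i => (k i : ℝ)) ∈ U)
    (hUne : U ≠ Set.univ) :
    ∀ C : ℝ, 0 < C →
      ∃ h : (Fin m → ℝ) → ℝ, ContDiff ℝ (⊤ : ℕ∞) h ∧ ZPeriodic h ∧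
        ∀ y ∈ U,
          (fun i => fderiv ℝ h y (Pi.single i 1)) ≠ (0 : Fin m → ℝ) ∧
          C ≤ ‖(fun i => fderiv ℝ h y (Pi.single i 1) : Fin m → ℝ)‖ := by
  intro C hC
  rcases U.eq_empty_or_nonempty with hUe | hUn
  · exact ⟨0, contDiff_const, fun k x => rfl, by simp [hUe]⟩
  obtain ⟨x₀, hx₀⟩ : ∃ x₀, x₀ ∉ U := by
    by_contra h
    push_neg at h
    exact hUne (Set.eq_univ_of_forall h)
  have hδpos : 0 < Metric.infDist x₀ U :=
    (hUclosed.notMem_iff_infDist_pos hUn).mp hx₀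
  set δ : ℝ := min (Metric.infDist x₀ U) (1 / 2) with hδdef
  have hδ0 : 0 < δ := lt_min hδpos (by norm_num)
  have hδle : δ ≤ 1 / 2 := min_le_right _ _
  -- choose parameters
  set s : ℝ := δ / 4 with hsdef
  have hs0 : 0 < s := by positivity
  have hsδ : s < δ := by simp only [hsdef]; linarith
  set a : ℝ := Real.cos (2 * π * s) with hadef
  have hπ := Real.pi_pos
  have h2πs_lt : 2 * π * s < π / 2 := by
    have : s ≤ 1 / 8 := by simp only [hsdef]; linarith
    nlinarith
  have ha0 : 0 < a := Real.cos_pos_of_mem_Ioo ⟨by nlinarith, h2πs_lt⟩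
  have ha1 : a < 1 := by
    have h1 : (0:ℝ) ∈ Set.Icc (0:ℝ) π := ⟨le_refl 0, le_of_lt hπ⟩
    have h2 : 2 * π * s ∈ Set.Icc (0:ℝ) π := ⟨by positivity, by nlinarith⟩
    have := Real.strictAntiOn_cos h1 h2 (by positivity)
    rwa [Real.cos_zero] at this
  set K : ℝ := a⁻¹ with hKdef
  have hK1 : 1 < K := (one_lt_inv₀ ha0).mpr ha1
  -- the quantitative bound
  set cδ : ℝ := Real.cos (2 * π * δ) with hcδdef
  have hcδa : cδ < a := by
    have h2πδ : 2 * π * δ ≤ π := by nlinarith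
    have h1 : 2 * π * s ∈ Set.Icc (0:ℝ) π := ⟨by positivity, by nlinarith⟩
    have h2 : 2 * π * δ ∈ Set.Icc (0:ℝ) π := ⟨by positivity, h2πδ⟩
    exact Real.strictAntiOn_cos h1 h2 (by nlinarith)
  set μ : ℝ := 2 * π * (1 - K * cδ) / (K + 1) ^ 2 with hμdef
  have hKcδ : K * cδ < 1 := by
    have : K * cδ < K * a := by
      exact mul_lt_mul_of_pos_left hcδa (by positivity)
    simpa [hKdef, inv_mul_cancel₀ (ne_of_gt ha0)] using this
  have hμ0 : 0 < μ := by
    apply div_pos (by nlinarith) (by positivity)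
  set A : ℝ := C / μ with hAdef
  have hA0 : 0 < A := by positivity
  -- the function
  set f : ℝ → ℝ := fun t => A * (Real.sin (2 * π * t) / (K - Real.cos (2 * π * t))) with hfdef
  set f' : ℝ → ℝ := fun t =>
    A * (2 * π * (K * Real.cos (2 * π * t) - 1) / (K - Real.cos (2 * π * t)) ^ 2) with hf'def
  set h : (Fin m → ℝ) → ℝ := fun x => ∑ i : Fin m, f (x i - x₀ i) with hhdef
  have hcontdiff : ContDiff ℝ (⊤ : ℕ∞) h := by
    apply ContDiff.sum
    intro i _
    exact (aux_contDiff A K hK1).comp ((by fun_prop : ContDiff ℝ (⊤ : ℕ∞) fun x : Fin m → ℝ => x i).sub contDiff_const)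
  have hfper : ∀ (t : ℝ) (n : ℤ), f (t + n) = f t := by
    intro t n
    have h1 : 2 * π * (t + n) = 2 * π * t + n * (2 * π) := by ring
    simp only [hfdef, h1, Real.sin_add_int_mul_two_pi, Real.cos_add_int_mul_two_pi]
  have hper : ZPeriodic h := by
    intro k x
    simp only [hhdef]
    refine Finset.sum_congr rfl fun i _ => ?_
    have : (x + fun i => (k i : ℝ)) i - x₀ i = (x i - x₀ i) + (k i : ℝ) := by
      simp [Pi.add_apply]; ring
    rw [this, hfper]
  -- derivative computation
  have hfderiv : ∀ y : Fin m → ℝ, ∀ j : Fin m,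
      fderiv ℝ h y (Pi.single j 1) = f' (y j - x₀ j) := by
    intro y j
    have hterm : ∀ i : Fin m, HasFDerivAt (fun x : Fin m → ℝ => f (x i - x₀ i))
        (f' (y i - x₀ i) • (ContinuousLinearMap.proj i : (Fin m → ℝ) →L[ℝ] ℝ)) y := by
      intro i
      have hg : HasFDerivAt (fun x : Fin m → ℝ => x i - x₀ i)
          (ContinuousLinearMap.proj i : (Fin m → ℝ) →L[ℝ] ℝ) y := by
        simpa using (hasFDerivAt_apply i y).sub_const (x₀ i)
      exact (aux_hasDerivAt A K hK1 (y i - x₀ i)).comp_hasFDerivAt (f := fun x : Fin m → ℝ => x i - x₀ i) y hg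
    have hsum : HasFDerivAt h
        (∑ i : Fin m, f' (y i - x₀ i) • (ContinuousLinearMap.proj i : (Fin m → ℝ) →L[ℝ] ℝ)) y :=
      HasFDerivAt.fun_sum (fun i _ => hterm i)
    rw [hsum.fderiv]
    rw [ContinuousLinearMap.sum_apply]
    simp only [ContinuousLinearMap.smul_apply, ContinuousLinearMap.proj_apply, smul_eq_mul]
    rw [Finset.sum_eq_single j]
    · simp
    · intro i _ hij
      simp [Pi.single_apply, hij]
    · simp
  -- main bound
  refine ⟨h, hcontdiff, hper, fun y hy => ?_⟩
  -- find a coordinate far from the lattice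
  obtain ⟨i, hi⟩ : ∃ i : Fin m, δ ≤ |y i - x₀ i - round (y i - x₀ i)| := by
    by_contra hcon
    push_neg at hcon
    have hz : (y + fun i => ((-round (y i - x₀ i) : ℤ) : ℝ)) ∈ U :=
      hUinv _ y hy
    have hd : dist x₀ (y + fun i => ((-round (y i - x₀ i) : ℤ) : ℝ)) < δ := by
      rw [dist_pi_lt_iff hδ0]
      intro b
      have hb := hcon b
      simp only [Pi.add_apply, Real.dist_eq, Int.cast_neg]
      rw [abs_sub_comm,
        show y b + -((round (y b - x₀ b) : ℤ) : ℝ) - x₀ b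
          = y b - x₀ b - round (y b - x₀ b) by push_cast; ring]
      exact hb
    have h1 : δ ≤ dist x₀ (y + fun i => ((-round (y i - x₀ i) : ℤ) : ℝ)) :=
      le_trans (min_le_left _ _) (Metric.infDist_le_dist_of_mem (x := x₀) hz)
    exact absurd (lt_of_le_of_lt h1 hd) (lt_irrefl δ)
  set t : ℝ := y i - x₀ i with htdef
  set d : ℝ := |t - round t| with hddef
  have hd12 : d ≤ 1 / 2 := abs_sub_round t
  have hdδ : δ ≤ d := hi
  -- cos (2πt) = cos (2πd)
  have hcos_eq : Real.cos (2 * π * t) = Real.cos (2 * π * d) := by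
    have h1 : 2 * π * t = 2 * π * (t - round t) + (round t : ℤ) * (2 * π) := by push_cast; ring
    rw [h1, Real.cos_add_int_mul_two_pi]
    rw [hddef, ← Real.cos_abs (2 * π * (t - round t)), abs_mul,
      abs_of_pos (by positivity : (0:ℝ) < 2 * π)]
  have hcos_le : Real.cos (2 * π * t) ≤ cδ := by
    rw [hcos_eq, hcδdef]
    exact Real.cos_le_cos_of_nonneg_of_le_pi (by positivity) (by nlinarith) (by nlinarith)
  -- bound the i-th partial derivative
  have hct := Real.neg_one_le_cos (2 * π * t)
  set cθ : ℝ := Real.cos (2 * π * t) with hcθdef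
  have hKcθ : K * cθ < 1 := by nlinarith
  have hden0 : 0 < K - cθ := by nlinarith
  have hdenle : K - cθ ≤ K + 1 := by nlinarith
  have hval : C ≤ |f' t| := by
    have hneg : f' t < 0 := by
      apply mul_neg_of_pos_of_neg hA0
      apply div_neg_of_neg_of_pos (by nlinarith) (by positivity)
    rw [abs_of_neg hneg]
    have hK0 : (0:ℝ) ≤ K := by linarith
    have hKmono : K * cθ ≤ K * cδ := mul_le_mul_of_nonneg_left hcos_le hK0
    have hstep : μ ≤ 2 * π * (1 - K * cθ) / (K - cθ) ^ 2 := by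
      rw [hμdef]
      apply div_le_div₀ (by nlinarith) (by nlinarith) (by positivity)
      exact pow_le_pow_left₀ (le_of_lt hden0) hdenle 2
    have : -f' t = A * (2 * π * (1 - K * cθ) / (K - cθ) ^ 2) := by
      simp only [hf'def]; ring
    rw [this]
    calc C = A * μ := by rw [hAdef, div_mul_cancel₀ _ hμ0.ne']
    _ ≤ A * (2 * π * (1 - K * cθ) / (K - cθ) ^ 2) := by
        exact mul_le_mul_of_nonneg_left hstep (le_of_lt hA0)
  have hnormi : C ≤ ‖(fun j => fderiv ℝ h y (Pi.single j 1) : Fin m → ℝ)‖ := by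
    calc C ≤ |f' t| := hval
    _ = ‖fderiv ℝ h y (Pi.single i 1)‖ := by
        rw [hfderiv y i, Real.norm_eq_abs]
    _ ≤ _ := norm_le_pi_norm (fun j => fderiv ℝ h y (Pi.single j 1)) i
  refine ⟨?_, hnormi⟩
  intro hzero
  rw [hzero] at hnormi
  simp at hnormi
  linarith
end
end

section
/- Let K : ℝ × (ℝ^m × ℝ^m) → ℝ be a compactly supported C^2 time-dependent Hamiltonian on T*ℝ^m = ℝ^m × ℝ^m with Hamiltonian flow ψ^t, and write ψ^t(q,p) = (Q(t,q,p), P(t,q,p)). Define F(t, x) := ∫_0^t [ ⟨P(s,x), ∂_s Q(s,x)⟩ − K(s, ψ^s(x)) ] ds for x = (q,p). Then for every t, the function x ↦ F(t,x) is differentiable and its differential equals (ψ^t)*λ − λ, where λ = Σ_i p_i dq_i is the Liouville form: that is, for all x = (q,p) and every tangent vector v = (v_q, v_p) ∈ ℝ^m × ℝ^m, D_x F(t,x)(v) = ⟨P(t,x), D_x Q(t,x)(v)⟩ − ⟨p, v_q⟩. -/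
/-!
Write `X_s` for the Hamiltonian vector field of `K_s` and `W_s = D_x ψ^s`. Compact support makes
`DX_s` bounded on `[0, t] × T^*ℝ^m`, so the linear variational equation `Ẇ = DX_s(ψ^s x) ∘ W`,
`W_0 = id`, has a solution on `[0, t]`, and Grönwall's inequality shows it is the derivative of
the flow. The action integrand along a trajectory is `L_s ∘ ψ^s` with
`L_s(z) = λ_z(X_s z) − K_s(z)`, and Hamilton's equations `λ_w(X_K) − λ_{X_K}(w) = dK(w)` turn
`D(L_s ∘ ψ^s)(v)` into `(d/ds) λ_{ψ^s x}(W_s v)`. Differentiating under the integral sign and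
integrating in `s` gives `λ_{ψ^t x}(W_t v) − λ_x(v)`. Negative times reduce to positive ones
through the time-reversed Hamiltonian `−K(−s, ·)`, whose flow is `ψ^{−s}`.
-/

open Set Function MeasureTheory

noncomputable section

/-- The cotangent space `T^*ℝ^m = ℝ^m × ℝ^m` with coordinates `(q, p)`. -/
abbrev Phase (m : ℕ) := (Fin m → ℝ) × (Fin m → ℝ)

/-- The Hamiltonian vector field `X_K = (∂K/∂p, −∂K/∂q)` of `K : Phase m → ℝ`. -/
def sympGrad (m : ℕ) (K : Phase m → ℝ) (z : Phase m) : Phase m :=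
  (fun i => fderiv ℝ K z (0, Pi.single i 1),
   fun i => -fderiv ℝ K z (Pi.single i 1, 0))

/-- `ψ` is the Hamiltonian flow of the time-dependent Hamiltonian `K`:
`ψ^0 = id` and `(d/dt) ψ^t(z) = X_{K_t}(ψ^t(z))`. -/
def IsHamFlow (m : ℕ) (K : ℝ → Phase m → ℝ) (ψ : ℝ → Phase m → Phase m) : Prop :=
  (∀ z, ψ 0 z = z) ∧
  ∀ (z : Phase m) (t : ℝ), HasDerivAt (fun s => ψ s z) (sympGrad m (K t) (ψ t z)) t

/-- A time-dependent function on phase space is compactly supported if all its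
time slices are supported in one fixed compact set. -/
def CompactlySupported (m : ℕ) (K : ℝ → Phase m → ℝ) : Prop :=
  ∃ C : Set (Phase m), IsCompact C ∧ ∀ t, Function.support (K t) ⊆ C

/-- The classical action `F(t,x) = ∫_0^t [⟨P(s,x), ∂_s Q(s,x)⟩ − K(s, ψ^s(x))] ds`,
where `ψ^s(x) = (Q(s,x), P(s,x))`. -/
def actF (m : ℕ) (K : ℝ → Phase m → ℝ) (ψ : ℝ → Phase m → Phase m)
    (t : ℝ) (x : Phase m) : ℝ :=
  ∫ s in (0:ℝ)..t,
    ((∑ i, (ψ s x).2 i * deriv (fun u => (ψ u x).1 i) s) - K s (ψ s x))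

open scoped NNReal

section LinearODE

variable {F : Type*} [NormedAddCommGroup F] [NormedSpace ℝ F]

theorem IsIntegralCurveOn.union_of_isClosed {γ : ℝ → F} {v : ℝ → F → F} {s t : Set ℝ}
    (hs : IsClosed s) (ht : IsClosed t) (hγs : IsIntegralCurveOn γ v s)
    (hγt : IsIntegralCurveOn γ v t) : IsIntegralCurveOn γ v (s ∪ t) := by
  have within (u : Set ℝ) (hu : IsClosed u) (hγu : IsIntegralCurveOn γ v u) (τ : ℝ) :
      HasDerivWithinAt γ (v τ (γ τ)) u τ := by
    by_cases hτ : τ ∈ u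
    · exact hγu τ hτ
    · exact HasFDerivWithinAt.of_notMem_closure (by rwa [hu.closure_eq])
  rintro τ -
  exact (within s hs hγs τ).union (within t ht hγt τ)

theorem IsIntegralCurveOn.piecewise_Icc {u w : ℝ → F} {v : ℝ → F → F} {a b c : ℝ}
    (hu : IsIntegralCurveOn u v (Icc a b)) (hw : IsIntegralCurveOn w v (Icc b c))
    (hab : a ≤ b) (hbc : b ≤ c) (huw : u b = w b) :
    IsIntegralCurveOn (fun τ => if τ ≤ b then u τ else w τ) v (Icc a c) := by
  have left : EqOn (fun τ => if τ ≤ b then u τ else w τ) u (Icc a b) := fun τ hτ =>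
    if_pos hτ.2
  have right : EqOn (fun τ => if τ ≤ b then u τ else w τ) w (Icc b c) := fun τ hτ => by
    by_cases h : τ ≤ b
    · simp only [le_antisymm h hτ.1, huw, ite_self]
    · exact if_neg h
  rw [← Icc_union_Icc_eq_Icc hab hbc]
  refine IsIntegralCurveOn.union_of_isClosed isClosed_Icc isClosed_Icc
    (fun τ hτ => ?_) (fun τ hτ => ?_)
  · convert (hu τ hτ).congr_of_mem left hτ using 2; exact left hτ
  · convert (hw τ hτ).congr_of_mem right hτ using 2; exact right hτ

variable [CompleteSpace F]

theorem exists_isIntegralCurveOn_Icc_clm_of_mul_le {B : ℝ → F →L[ℝ] F} {a b : ℝ} {L : ℝ≥0}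
    (hab : a ≤ b) (hB : ContinuousOn B (Icc a b)) (hBL : ∀ s ∈ Icc a b, ‖B s‖₊ ≤ L)
    (hstep : L * (b - a) ≤ 1 / 2) (w₀ : F) :
    ∃ w : ℝ → F, w a = w₀ ∧ IsIntegralCurveOn w (fun s => B s) (Icc a b) := by
  have hpl : IsPicardLindelof (fun s => B s) (tmin := a) (tmax := b) ⟨a, le_rfl, hab⟩ w₀
      (‖w₀‖₊ + 1) 0 ((2 * ‖w₀‖₊ + 1) * L) L := by
    refine ⟨fun s hs => ((B s).lipschitz.weaken (hBL s hs)).lipschitzOnWith,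
      fun u _ => hB.clm_apply continuousOn_const, fun s hs u hu => ?_, ?_⟩
    · have hu' : ‖u‖ ≤ 2 * ‖w₀‖ + 1 := by
        have hball := mem_closedBall_iff_norm.mp hu
        push_cast at hball
        linarith [norm_le_norm_add_norm_sub' u w₀]
      calc ‖B s u‖ ≤ ‖B s‖ * ‖u‖ := (B s).le_opNorm u
        _ ≤ L * (2 * ‖w₀‖ + 1) := mul_le_mul (hBL s hs) hu' (norm_nonneg _) L.2
        _ = _ := by push_cast; ring
    · simp only [sub_self, max_eq_left (sub_nonneg.2 hab), NNReal.coe_zero, sub_zero]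
      push_cast
      nlinarith [norm_nonneg w₀]
  exact hpl.exists_eq_forall_mem_Icc_hasDerivWithinAt₀

theorem exists_isIntegralCurveOn_Icc_clm {B : ℝ → F →L[ℝ] F} {T : ℝ}
    (hB : ContinuousOn B (Icc 0 T)) (w₀ : F) :
    ∃ w : ℝ → F, w 0 = w₀ ∧ IsIntegralCurveOn w (fun s => B s) (Icc 0 T) := by
  rcases lt_or_ge T 0 with hT | hT
  · exact ⟨fun _ => w₀, rfl, by simp [Icc_eq_empty_of_lt hT, IsIntegralCurveOn]⟩
  obtain ⟨L, hL⟩ := isCompact_Icc.bddAbove_image hB.nnnorm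
  have hBL : ∀ s ∈ Icc 0 T, ‖B s‖₊ ≤ L := fun s hs => hL (mem_image_of_mem _ hs)
  -- Linear growth makes the Picard–Lindelöf step length independent of the initial value.
  set τ : ℝ := 1 / (2 * L + 1)
  have hτ : 0 < τ := by positivity
  have hLτ : L * τ ≤ 1 / 2 := by
    rw [mul_one_div, div_le_iff₀ (by positivity)]; linarith
  set a : ℕ → ℝ := fun n => min (n * τ) T
  have ha_step : ∀ n, a n ≤ a (n + 1) ∧ a (n + 1) - a n ≤ τ := by
    intro n
    simp only [a]; push_cast
    constructor
    · exact min_le_min_right _ (by linarith)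
    · rcases le_total (n * τ) T with h | h
      · rw [min_eq_left h]; linarith [min_le_left ((n + 1) * τ) T]
      · rw [min_eq_right h, min_eq_right (by linarith)]; linarith
  have extend : ∀ n, ∃ w : ℝ → F, w 0 = w₀ ∧
      IsIntegralCurveOn w (fun s => B s) (Icc 0 (a n)) := by
    intro n
    induction n with
    | zero =>
      simp only [a, CharP.cast_eq_zero, zero_mul, min_eq_left hT]
      exact exists_isIntegralCurveOn_Icc_clm_of_mul_le le_rfl (hB.mono (by simp [hT]))
        (fun s hs => hBL s (by simp_all)) (by simp) w₀
    | succ n ih =>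
      obtain ⟨w, hw0, hw⟩ := ih
      have han : 0 ≤ a n := le_min (by positivity) hT
      have hsub : Icc (a n) (a (n + 1)) ⊆ Icc 0 T := Icc_subset_Icc han (min_le_right _ _)
      obtain ⟨u, hu0, hu⟩ := exists_isIntegralCurveOn_Icc_clm_of_mul_le (ha_step n).1
        (hB.mono hsub) (fun s hs => hBL s (hsub hs))
        (le_trans (mul_le_mul_of_nonneg_left (ha_step n).2 L.2) hLτ) (w (a n))
      exact ⟨_, by simp [han, hw0], hw.piecewise_Icc hu han (ha_step n).1 hu0.symm⟩
  obtain ⟨n, hn⟩ := exists_nat_ge (T / τ)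
  have : a n = T := min_eq_right (by rwa [div_le_iff₀ hτ] at hn)
  simpa [this] using extend n

end LinearODE

section Flow

variable {E G : Type*} [NormedAddCommGroup E] [NormedSpace ℝ E]
  [NormedAddCommGroup G] [NormedSpace ℝ G]

theorem ContDiff.contDiff_fderiv_slice {n k : WithTop ℕ∞} {f : ℝ → E → G}
    (hf : ContDiff ℝ k (uncurry f)) (hnk : n + 1 ≤ k) :
    ContDiff ℝ n fun p : ℝ × E => fderiv ℝ (f p.1) p.2 :=
  ContDiff.fderiv (f := fun p : ℝ × E => f p.1)
    (hf.comp (contDiff_fst.comp contDiff_fst |>.prodMk contDiff_snd)) contDiff_snd hnk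

theorem ContDiff.continuous_fderiv_slice {f : ℝ → E → G} (hf : ContDiff ℝ 1 (uncurry f)) :
    Continuous fun p : ℝ × E => fderiv ℝ (f p.1) p.2 :=
  (hf.contDiff_fderiv_slice (n := 0) (by norm_num)).continuous

theorem ContDiff.differentiable_slice {f : ℝ → E → G} (hf : ContDiff ℝ 1 (uncurry f))
    (s : ℝ) : Differentiable ℝ (f s) :=
  (hf.comp (contDiff_const.prodMk contDiff_id)).differentiable one_ne_zero

theorem gronwallBound_zero_eq_mul (K ε x : ℝ) :
    gronwallBound 0 K ε x = ε * gronwallBound 0 K 1 x := by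
  unfold gronwallBound
  split_ifs <;> ring

theorem norm_le_mul_gronwallBound_of_norm_deriv_right_le {r r' : ℝ → E} {T K η : ℝ}
    (hK : 0 ≤ K) (hη : 0 ≤ η) (hr : ContinuousOn r (Icc 0 T))
    (hr' : ∀ s ∈ Ico 0 T, HasDerivWithinAt r (r' s) (Ici s) s) (hr₀ : r 0 = 0)
    (bound : ∀ s ∈ Ico 0 T, ‖r' s‖ ≤ K * ‖r s‖ + η) :
    ∀ s ∈ Icc 0 T, ‖r s‖ ≤ η * gronwallBound 0 K 1 T := by
  intro s hs
  calc ‖r s‖ ≤ gronwallBound 0 K η (s - 0) :=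
        norm_le_gronwallBound_of_norm_deriv_right_le hr hr' (by simp [hr₀]) bound s hs
    _ = η * gronwallBound 0 K 1 s := by rw [sub_zero, gronwallBound_zero_eq_mul]
    _ ≤ η * gronwallBound 0 K 1 T :=
        mul_le_mul_of_nonneg_left (gronwallBound_mono le_rfl zero_le_one hK hs.2) hη

theorem exists_norm_sub_sub_fderiv_le {f : ℝ → E → G} (hf : ContDiff ℝ 1 (uncurry f))
    {I : Set ℝ} (hI : IsCompact I) {γ : ℝ → E} (hγ : ContinuousOn γ I) {ε : ℝ} (hε : 0 < ε) :
    ∃ δ > 0, ∀ s ∈ I, ∀ z, ‖z - γ s‖ ≤ δ →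
      ‖f s z - f s (γ s) - fderiv ℝ (f s) (γ s) (z - γ s)‖ ≤ ε * ‖z - γ s‖ := by
  have hD := hf.continuous_fderiv_slice
  have hgraph : IsCompact ((fun s => (s, γ s)) '' I) :=
    hI.image_of_continuousOn (continuousOn_id.prodMk hγ)
  obtain ⟨δ, hδ, hclose⟩ := Metric.mem_uniformity_dist.1 <|
    hgraph.uniformContinuousAt_of_continuousAt _ (fun p _ => hD.continuousAt)
      (Metric.dist_mem_uniformity hε)
  refine ⟨δ / 2, half_pos hδ, fun s hs z hz => ?_⟩
  have hderiv_close : ∀ w ∈ Metric.closedBall (γ s) (δ / 2),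
      ‖fderiv ℝ (f s) w - fderiv ℝ (f s) (γ s)‖ ≤ ε := by
    intro w hw
    have hdist : dist (s, γ s) (s, w) < δ := by
      rw [Prod.dist_eq, dist_self, max_eq_right dist_nonneg, dist_comm]
      exact (Metric.mem_closedBall.1 hw).trans_lt (half_lt_self hδ)
    rw [← dist_eq_norm, dist_comm]
    exact (hclose hdist ⟨s, hs, rfl⟩).le
  have hmvt := (convex_closedBall (γ s) (δ / 2)).norm_image_sub_le_of_norm_hasFDerivWithin_le
    (f := fun w => f s w - fderiv ℝ (f s) (γ s) w)
    (fun w _ => (((hf.differentiable_slice s) w).hasFDerivAt.sub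
      (fderiv ℝ (f s) (γ s)).hasFDerivAt).hasFDerivWithinAt)
    hderiv_close (Metric.mem_closedBall_self (half_pos hδ).le)
    (mem_closedBall_iff_norm.2 hz)
  simpa only [map_sub, sub_sub_sub_comm, sub_right_comm] using hmvt

theorem exists_nnnorm_fderiv_le_of_support_subset {g : ℝ → E → G}
    (hg : ContDiff ℝ 1 (uncurry g)) {C : Set E} (hC : IsCompact C)
    (hsupp : ∀ s, support (g s) ⊆ C) {I : Set ℝ} (hI : IsCompact I) :
    ∃ L : ℝ≥0, ∀ s ∈ I, ∀ z, ‖fderiv ℝ (g s) z‖₊ ≤ L := by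
  obtain ⟨L, hL⟩ := (hI.prod hC).bddAbove_image
    hg.continuous_fderiv_slice.nnnorm.continuousOn
  refine ⟨L, fun s hs z => ?_⟩
  by_cases hz : z ∈ C
  · exact hL ⟨(s, z), ⟨hs, hz⟩, rfl⟩
  · have hfderiv : fderiv ℝ (g s) z = 0 := notMem_support.1 fun h =>
      hz (closure_minimal (hsupp s) hC.isClosed (support_fderiv_subset ℝ h))
    simp [hfderiv]

variable {f : ℝ → E → E} {φ : ℝ → E → E} {T : ℝ} {L : ℝ≥0}

theorem dist_flow_le (hfL : ∀ s ∈ Ico 0 T, LipschitzWith L (f s)) (hφ₀ : ∀ z, φ 0 z = z)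
    (hφ : ∀ z, IsIntegralCurve (φ · z) f) (y z : E) :
    ∀ s ∈ Icc 0 T, dist (φ s y) (φ s z) ≤ Real.exp (L * T) * dist y z := by
  intro s hs
  have := dist_le_of_trajectories_ODE_of_mem (s := fun _ => univ)
    (fun s hs => (hfL s hs).lipschitzOnWith) (hφ y).continuous.continuousOn
    (fun s _ => (hφ y s).hasDerivWithinAt) (fun _ _ => trivial)
    (hφ z).continuous.continuousOn (fun s _ => (hφ z s).hasDerivWithinAt) (fun _ _ => trivial)
    (by rw [hφ₀, hφ₀]) s hs
  rw [sub_zero, mul_comm] at this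
  exact this.trans (by gcongr; exact hs.2)

/-- The remainder `r τ = φ τ y - φ τ x - W τ (y - x)` solves `r' = A_τ r + e_τ`, where `e_τ` is
the first-order Taylor error of `f τ` at `φ τ x`, so Grönwall's inequality bounds it. -/
theorem norm_flow_sub_sub_le (hf : ContDiff ℝ 1 (uncurry f))
    (hL : ∀ s ∈ Icc 0 T, ∀ z, ‖fderiv ℝ (f s) z‖₊ ≤ L) (hφ₀ : ∀ z, φ 0 z = z)
    (hφ : ∀ z, IsIntegralCurve (φ · z) f) {x : E} {W : ℝ → E →L[ℝ] E}
    (hW₀ : W 0 = ContinuousLinearMap.id ℝ E)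
    (hW : IsIntegralCurveOn W (fun s V => (fderiv ℝ (f s) (φ s x)).comp V) (Icc 0 T))
    {ε δ : ℝ} (hε : 0 ≤ ε) (htaylor : ∀ s ∈ Icc 0 T, ∀ z, ‖z - φ s x‖ ≤ δ →
      ‖f s z - f s (φ s x) - fderiv ℝ (f s) (φ s x) (z - φ s x)‖ ≤ ε * ‖z - φ s x‖)
    {y : E} (hy : Real.exp (L * T) * ‖y - x‖ ≤ δ) :
    ∀ s ∈ Icc 0 T, ‖φ s y - φ s x - W s (y - x)‖
      ≤ ε * (Real.exp (L * T) * ‖y - x‖) * gronwallBound 0 L 1 T := by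
  have hfL : ∀ s ∈ Ico 0 T, LipschitzWith L (f s) := fun s hs =>
    lipschitzWith_of_nnnorm_fderiv_le (hf.differentiable_slice s) (hL s (Ico_subset_Icc_self hs))
  have hnear : ∀ τ ∈ Icc 0 T, ‖φ τ y - φ τ x‖ ≤ Real.exp (L * T) * ‖y - x‖ := fun τ hτ => by
    simpa only [dist_eq_norm] using dist_flow_le hfL hφ₀ hφ y x τ hτ
  refine norm_le_mul_gronwallBound_of_norm_deriv_right_le L.2 (by positivity)
    (r' := fun τ => f τ (φ τ y) - f τ (φ τ x) - fderiv ℝ (f τ) (φ τ x) (W τ (y - x)))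
    (((hφ y).continuous.sub (hφ x).continuous).continuousOn.sub
      (hW.continuousOn.clm_apply continuousOn_const)) (fun τ hτ => ?_) (by simp [hφ₀, hW₀])
    (fun τ hτ => ?_)
  · have hWτ := ((hW τ (Ico_subset_Icc_self hτ)).mono_of_mem_nhdsWithin
      (Icc_mem_nhdsGE_of_mem hτ)).clm_apply (hasDerivWithinAt_const τ _ (y - x))
    simp only [ContinuousLinearMap.comp_apply, map_zero, add_zero] at hWτ
    exact ((hφ y τ).hasDerivWithinAt.sub (hφ x τ).hasDerivWithinAt).sub hWτ
  · have hτ' := Ico_subset_Icc_self hτ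
    set A := fderiv ℝ (f τ) (φ τ x)
    have hsplit : f τ (φ τ y) - f τ (φ τ x) - A (W τ (y - x))
        = A (φ τ y - φ τ x - W τ (y - x)) + (f τ (φ τ y) - f τ (φ τ x) - A (φ τ y - φ τ x)) := by
      simp only [map_sub]; abel
    rw [hsplit]
    refine norm_add_le_of_le ((A.le_opNorm _).trans (by gcongr; exact hL τ hτ' _)) ?_
    exact (htaylor τ hτ' _ ((hnear τ hτ').trans hy)).trans (by gcongr; exact hnear τ hτ')

theorem hasFDerivAt_flow (hf : ContDiff ℝ 1 (uncurry f))
    (hL : ∀ s ∈ Icc 0 T, ∀ z, ‖fderiv ℝ (f s) z‖₊ ≤ L) (hφ₀ : ∀ z, φ 0 z = z)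
    (hφ : ∀ z, IsIntegralCurve (φ · z) f) {x : E} {W : ℝ → E →L[ℝ] E}
    (hW₀ : W 0 = ContinuousLinearMap.id ℝ E)
    (hW : IsIntegralCurveOn W (fun s V => (fderiv ℝ (f s) (φ s x)).comp V) (Icc 0 T)) :
    ∀ s ∈ Icc 0 T, HasFDerivAt (φ s) (W s) x := by
  intro s hs
  set E₀ := Real.exp (L * T)
  set C₀ := gronwallBound 0 L 1 T
  have hE₀ : 0 < E₀ := Real.exp_pos _
  have hC₀ : 0 ≤ C₀ := by
    simpa [gronwallBound_x0] using gronwallBound_mono le_rfl zero_le_one L.2 (hs.1.trans hs.2)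
  rw [hasFDerivAt_iff_isLittleO, Asymptotics.isLittleO_iff]
  intro c hc
  obtain ⟨δ, hδ, htaylor⟩ := exists_norm_sub_sub_fderiv_le hf isCompact_Icc
    (hφ x).continuous.continuousOn (ε := c / (E₀ * (C₀ + 1))) (by positivity)
  filter_upwards [Metric.closedBall_mem_nhds x (div_pos hδ hE₀)] with y hy
  rw [Metric.mem_closedBall, dist_eq_norm, le_div_iff₀ hE₀, mul_comm] at hy
  calc ‖φ s y - φ s x - W s (y - x)‖ ≤ c / (E₀ * (C₀ + 1)) * (E₀ * ‖y - x‖) * C₀ :=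
        norm_flow_sub_sub_le hf hL hφ₀ hφ hW₀ hW (by positivity) htaylor hy s hs
    _ = c * ‖y - x‖ * (C₀ / (C₀ + 1)) := by field_simp
    _ ≤ c * ‖y - x‖ :=
        mul_le_of_le_one_right (by positivity) ((div_le_one (by positivity)).2 (by linarith))

theorem exists_hasFDerivAt_flow [CompleteSpace E] (hf : ContDiff ℝ 1 (uncurry f))
    (hL : ∀ s ∈ Icc 0 T, ∀ z, ‖fderiv ℝ (f s) z‖₊ ≤ L) (hφ₀ : ∀ z, φ 0 z = z)
    (hφ : ∀ z, IsIntegralCurve (φ · z) f) (x : E) :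
    ∃ W : ℝ → E →L[ℝ] E, W 0 = ContinuousLinearMap.id ℝ E ∧
      IsIntegralCurveOn W (fun s V => (fderiv ℝ (f s) (φ s x)).comp V) (Icc 0 T) ∧
      ∀ s ∈ Icc 0 T, HasFDerivAt (φ s) (W s) x := by
  have hA : Continuous fun s => fderiv ℝ (f s) (φ s x) :=
    hf.continuous_fderiv_slice.comp (continuous_id.prodMk (hφ x).continuous)
  obtain ⟨W, hW₀, hW⟩ := exists_isIntegralCurveOn_Icc_clm
    ((ContinuousLinearMap.compL ℝ E E E).continuous.comp hA).continuousOn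
    (ContinuousLinearMap.id ℝ E)
  exact ⟨W, hW₀, hW, hasFDerivAt_flow hf hL hφ₀ hφ hW₀ hW⟩

theorem hasFDerivAt_integral_comp_flow [CompleteSpace G] {g : ℝ → E → G}
    (hg : ContDiff ℝ 1 (uncurry g)) {Lg : ℝ≥0}
    (hgL : ∀ s ∈ Icc 0 T, ∀ z, ‖fderiv ℝ (g s) z‖₊ ≤ Lg)
    (hfL : ∀ s ∈ Ico 0 T, LipschitzWith L (f s)) (hφ₀ : ∀ z, φ 0 z = z)
    (hφ : ∀ z, IsIntegralCurve (φ · z) f) (hT : 0 ≤ T) {x : E} {W : ℝ → E →L[ℝ] E}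
    (hW : ContinuousOn W (Icc 0 T)) (hφW : ∀ s ∈ Icc 0 T, HasFDerivAt (φ s) (W s) x) :
    IntervalIntegrable (fun s => (fderiv ℝ (g s) (φ s x)).comp (W s)) volume 0 T ∧
      HasFDerivAt (fun y => ∫ s in (0 : ℝ)..T, g s (φ s y))
        (∫ s in (0 : ℝ)..T, (fderiv ℝ (g s) (φ s x)).comp (W s)) x := by
  have hIoc : uIoc 0 T ⊆ Icc 0 T := by rw [uIoc_of_le hT]; exact Ioc_subset_Icc_self
  have hcont : ∀ y, Continuous fun s => g s (φ s y) := fun y =>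
    hg.continuous.comp (continuous_id.prodMk (hφ y).continuous)
  have hDg : Continuous fun s => fderiv ℝ (g s) (φ s x) :=
    hg.continuous_fderiv_slice.comp (continuous_id.prodMk (hφ x).continuous)
  have hlip : ∀ s ∈ Icc 0 T, LipschitzWith (Real.nnabs (Lg * Real.exp (L * T)))
      fun y => g s (φ s y) := fun s hs => by
    refine LipschitzWith.of_dist_le_mul fun y y' => ?_
    rw [Real.coe_nnabs, abs_of_nonneg (by positivity), mul_assoc]
    exact ((lipschitzWith_of_nnnorm_fderiv_le (hg.differentiable_slice s) (hgL s hs)).dist_le_mul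
      _ _).trans (by gcongr; exact dist_flow_le hfL hφ₀ hφ y y' s hs)
  exact intervalIntegral.hasFDerivAt_integral_of_dominated_loc_of_lip (𝕜 := ℝ)
    (s := univ) Filter.univ_mem (.of_forall fun y => (hcont y).aestronglyMeasurable)
    ((hcont x).intervalIntegrable 0 T)
    (((hDg.continuousOn.clm_comp hW).mono hIoc).aestronglyMeasurable measurableSet_uIoc)
    (ae_of_all _ fun s hs => (hlip s (hIoc hs)).lipschitzOnWith) intervalIntegrable_const
    (ae_of_all _ fun s hs => ((hg.differentiable_slice s) _).hasFDerivAt.comp x (hφW s (hIoc hs)))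

end Flow

section Hamiltonian

variable {m : ℕ}

def liouville (m : ℕ) : Phase m →L[ℝ] Phase m →L[ℝ] ℝ :=
  ∑ i : Fin m, (ContinuousLinearMap.mul ℝ ℝ).bilinearComp
    ((ContinuousLinearMap.proj i).comp (ContinuousLinearMap.snd ℝ _ _))
    ((ContinuousLinearMap.proj i).comp (ContinuousLinearMap.fst ℝ _ _))

@[simp]
theorem liouville_apply (z w : Phase m) : liouville m z w = ∑ i, z.2 i * w.1 i := by
  simp [liouville]

theorem ContinuousLinearMap.apply_eq_sum_mul_single (Λ : (Fin m → ℝ) →L[ℝ] ℝ) (q : Fin m → ℝ) :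
    Λ q = ∑ i, q i * Λ (Pi.single i 1) := by
  conv_lhs => rw [← Finset.univ_sum_single q, map_sum]
  refine Finset.sum_congr rfl fun i _ => ?_
  rw [← smul_eq_mul, ← map_smul, ← Pi.single_smul', smul_eq_mul, mul_one]

theorem liouville_sub_liouville_sympGrad (K : Phase m → ℝ) (z w : Phase m) :
    liouville m w (sympGrad m K z) - liouville m (sympGrad m K z) w = fderiv ℝ K z w := by
  set Λ := fderiv ℝ K z
  rw [← Λ.comp_inl_add_comp_inr w, (Λ.comp (.inl ℝ _ _)).apply_eq_sum_mul_single,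
    (Λ.comp (.inr ℝ _ _)).apply_eq_sum_mul_single]
  simp [sympGrad, Λ, mul_comm, add_comm]

def lagrangian (m : ℕ) (K : ℝ → Phase m → ℝ) (s : ℝ) (z : Phase m) : ℝ :=
  liouville m z (sympGrad m (K s) z) - K s z

theorem support_sympGrad_subset (K : Phase m → ℝ) : support (sympGrad m K) ⊆ tsupport K := by
  intro z hz
  refine support_fderiv_subset ℝ fun h => hz ?_
  simp [sympGrad, h, Prod.ext_iff, funext_iff]

theorem support_lagrangian_subset (K : ℝ → Phase m → ℝ) (s : ℝ) :
    support (lagrangian m K s) ⊆ tsupport (K s) := by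
  intro z hz
  by_contra h
  have hK : K s z = 0 := notMem_support.1 fun h' => h (subset_closure h')
  have hX : sympGrad m (K s) z = 0 := notMem_support.1 fun h' => h (support_sympGrad_subset _ h')
  exact hz (by simp [lagrangian, hK, hX])

variable {K : ℝ → Phase m → ℝ}

theorem contDiff_sympGrad (hK : ContDiff ℝ 2 (uncurry K)) :
    ContDiff ℝ 1 (uncurry fun s => sympGrad m (K s)) := by
  have hD := hK.contDiff_fderiv_slice (n := 1) (by norm_num)
  exact (contDiff_pi.2 fun i => hD.clm_apply contDiff_const).prodMk
    (contDiff_pi.2 fun i => (hD.clm_apply contDiff_const).neg)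

theorem contDiff_lagrangian (hK : ContDiff ℝ 2 (uncurry K)) :
    ContDiff ℝ 1 (uncurry (lagrangian m K)) :=
  (((liouville m).contDiff.comp contDiff_snd).clm_apply (contDiff_sympGrad hK)).sub
    (hK.of_le one_le_two)

theorem fderiv_lagrangian_apply (hK : ContDiff ℝ 2 (uncurry K)) (s : ℝ) (z w : Phase m) :
    fderiv ℝ (lagrangian m K s) z w
      = liouville m (sympGrad m (K s) z) w + liouville m z (fderiv ℝ (sympGrad m (K s)) z w) := by
  have hX := ((contDiff_sympGrad hK).differentiable_slice s z).hasFDerivAt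
  have hKs := (((hK.of_le one_le_two).differentiable_slice s) z).hasFDerivAt
  have hL : HasFDerivAt (lagrangian m K s) _ z :=
    ((liouville m).hasFDerivAt_of_bilinear (hasFDerivAt_id z) hX).sub hKs
  have key := liouville_sub_liouville_sympGrad (K s) z w
  rw [hL.fderiv]
  simp only [id_eq, ContinuousLinearMap.precompR_apply, ContinuousLinearMap.compL_apply,
    sub_apply, add_apply, ContinuousLinearMap.comp_apply, ContinuousLinearMap.precompL_apply,
    ContinuousLinearMap.id_apply]
  linarith

variable {ψ : ℝ → Phase m → Phase m}

theorem actF_eq_integral_lagrangian (hψ : IsHamFlow m K ψ) (t : ℝ) (y : Phase m) :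
    actF m K ψ t y = ∫ s in (0 : ℝ)..t, lagrangian m K s (ψ s y) := by
  have hQ : ∀ s i, deriv (fun u => (ψ u y).1 i) s = (sympGrad m (K s) (ψ s y)).1 i := by
    intro s i
    have h : HasDerivAt (fun u => (ψ u y).1 i) ((sympGrad m (K s) (ψ s y)).1 i) s :=
      (((ContinuousLinearMap.proj (R := ℝ) (φ := fun _ : Fin m => ℝ) i).comp
        (ContinuousLinearMap.fst ℝ _ _)).hasFDerivAt.comp_hasDerivAt s (hψ.2 y s) :)
    exact h.deriv
  simp [actF, lagrangian, hQ]

theorem integral_fderiv_lagrangian_apply (hK : ContDiff ℝ 2 (uncurry K))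
    (hψ : IsHamFlow m K ψ) {t : ℝ} (ht : 0 ≤ t) {x : Phase m} {W : ℝ → Phase m →L[ℝ] Phase m}
    (hW₀ : W 0 = ContinuousLinearMap.id ℝ _)
    (hW : IsIntegralCurveOn W (fun s V => (fderiv ℝ (sympGrad m (K s)) (ψ s x)).comp V) (Icc 0 t))
    (v : Phase m) :
    ∫ s in (0 : ℝ)..t, fderiv ℝ (lagrangian m K s) (ψ s x) (W s v)
      = liouville m (ψ t x) (W t v) - liouville m x v := by
  have hψx : Continuous fun s => ψ s x := IsIntegralCurve.continuous (hψ.2 x)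
  have hDL : Continuous fun s => fderiv ℝ (lagrangian m K s) (ψ s x) :=
    (contDiff_lagrangian hK).continuous_fderiv_slice.comp (continuous_id.prodMk hψx)
  rw [intervalIntegral.integral_eq_sub_of_hasDerivAt_of_le ht
    (f := fun s => liouville m (ψ s x) (W s v))
    (((liouville m).continuous.comp hψx).continuousOn.clm_apply
      (hW.continuousOn.clm_apply continuousOn_const))
    (fun s hs => ?_)
    ((hDL.continuousOn.clm_apply (hW.continuousOn.clm_apply continuousOn_const)
      ).intervalIntegrable_of_Icc ht)]
  · simp [hψ.1, hW₀]
  · have hWv := ((hW s (Ioo_subset_Icc_self hs)).hasDerivAt (Icc_mem_nhds hs.1 hs.2)).clm_apply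
      (hasDerivAt_const s v)
    convert (liouville m).hasDerivAt_of_bilinear (fun _ => hψ.2 x s) (fun _ => hWv) using 1
    simp [fderiv_lagrangian_apply hK, add_comm]

theorem action_primitive_of_liouville_difference_of_nonneg (hK : ContDiff ℝ 2 (uncurry K))
    (hKsupp : CompactlySupported m K) (hψ : IsHamFlow m K ψ) {t : ℝ} (ht : 0 ≤ t)
    (x : Phase m) :
    DifferentiableAt ℝ (fun y => actF m K ψ t y) x ∧
      ∀ v : Phase m,
        fderiv ℝ (fun y => actF m K ψ t y) x v
          = (∑ i, (ψ t x).2 i * fderiv ℝ (fun y => (ψ t y).1) x v i)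
            - ∑ i, x.2 i * v.1 i := by
  obtain ⟨C, hC, hsupp⟩ := hKsupp
  have hKC : ∀ s, tsupport (K s) ⊆ C := fun s => closure_minimal (hsupp s) hC.isClosed
  have hX := contDiff_sympGrad hK
  obtain ⟨L, hL⟩ := exists_nnnorm_fderiv_le_of_support_subset hX hC
    (fun s => (support_sympGrad_subset _).trans (hKC s)) (isCompact_Icc (a := 0) (b := t))
  obtain ⟨Lg, hLg⟩ := exists_nnnorm_fderiv_le_of_support_subset (contDiff_lagrangian hK) hC
    (fun s => (support_lagrangian_subset K s).trans (hKC s)) (isCompact_Icc (a := 0) (b := t))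
  obtain ⟨W, hW₀, hW, hψW⟩ := exists_hasFDerivAt_flow hX hL hψ.1 hψ.2 x
  obtain ⟨hint, hderiv⟩ := hasFDerivAt_integral_comp_flow (contDiff_lagrangian hK) hLg
    (fun s hs => lipschitzWith_of_nnnorm_fderiv_le (hX.differentiable_slice s)
      (hL s (Ico_subset_Icc_self hs))) hψ.1 hψ.2 ht hW.continuousOn hψW
  simp only [actF_eq_integral_lagrangian hψ]
  refine ⟨hderiv.differentiableAt, fun v => ?_⟩
  rw [hderiv.fderiv, ContinuousLinearMap.intervalIntegral_apply hint,
    (hψW t ⟨ht, le_rfl⟩).fst.fderiv]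
  simpa using integral_fderiv_lagrangian_apply hK hψ ht hW₀ hW v

end Hamiltonian

section TimeReversal

variable {m : ℕ} {K : ℝ → Phase m → ℝ} {ψ : ℝ → Phase m → Phase m}

theorem sympGrad_neg (K : Phase m → ℝ) (z : Phase m) :
    sympGrad m (fun w => -K w) z = -sympGrad m K z := by
  simp [sympGrad, fderiv_fun_neg, Prod.ext_iff, funext_iff]

theorem contDiff_uncurry_comp_neg {n : WithTop ℕ∞} (hK : ContDiff ℝ n (uncurry K)) :
    ContDiff ℝ n (uncurry fun s z => -K (-s) z) :=
  (hK.comp (contDiff_fst.neg.prodMk contDiff_snd)).neg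

theorem CompactlySupported.comp_neg (hK : CompactlySupported m K) :
    CompactlySupported m fun s z => -K (-s) z := by
  obtain ⟨C, hC, hsupp⟩ := hK
  exact ⟨C, hC, fun s z hz => hsupp (-s) fun h => hz (by simp [h])⟩

theorem IsHamFlow.comp_neg (hψ : IsHamFlow m K ψ) :
    IsHamFlow m (fun s z => -K (-s) z) fun s => ψ (-s) := by
  refine ⟨fun z => by simpa using hψ.1 z, fun z s => ?_⟩
  have h : HasDerivAt (fun s => ψ (-s) z) ((-1 : ℝ) • sympGrad m (K (-s)) (ψ (-s) z)) s :=
    (hψ.2 z (-s)).scomp s (hasDerivAt_neg s)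
  simpa [sympGrad_neg] using h

theorem actF_comp_neg (t : ℝ) (y : Phase m) :
    actF m (fun s z => -K (-s) z) (fun s => ψ (-s)) (-t) y = actF m K ψ t y := by
  set g := fun s => ∑ i, (ψ s y).2 i * deriv (fun u => (ψ u y).1 i) s - K s (ψ s y)
  have hQ : ∀ s i, deriv (fun u => (ψ (-u) y).1 i) s = -deriv (fun u => (ψ u y).1 i) (-s) :=
    fun s i => deriv_comp_neg (fun u => (ψ u y).1 i) s
  calc actF m (fun s z => -K (-s) z) (fun s => ψ (-s)) (-t) y
      = ∫ s in (0 : ℝ)..-t, -g (-s) := by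
        simp only [actF, hQ, g, mul_neg, Finset.sum_neg_distrib]
        congr 1 with s
        ring
    _ = ∫ s in (0 : ℝ)..t, g s := by
      rw [intervalIntegral.integral_neg, intervalIntegral.integral_comp_neg, neg_neg, neg_zero,
        intervalIntegral.integral_symm, neg_neg]

end TimeReversal

/-- Let `ψ^t` be the Hamiltonian flow of a compactly supported `C^2`
Hamiltonian `K` on `T^*ℝ^m`, and `F` the classical action. Then for each `t` the map
`x ↦ F(t,x)` is differentiable with differential `(ψ^t)^*λ − λ`, where `λ = Σ p_i dq_i`:
for every tangent vector `v = (v_q, v_p)`,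
`D_x F(t,x)(v) = ⟨P(t,x), D_x Q(t,x)(v)⟩ − ⟨p, v_q⟩`. -/
theorem action_primitive_of_liouville_difference
    (m : ℕ) (K : ℝ → Phase m → ℝ) (ψ : ℝ → Phase m → Phase m)
    (hK : ContDiff ℝ 2 (Function.uncurry K))
    (hKsupp : CompactlySupported m K)
    (hψ : IsHamFlow m K ψ) :
    ∀ (t : ℝ) (x : Phase m),
      DifferentiableAt ℝ (fun y => actF m K ψ t y) x ∧
      ∀ v : Phase m,
        fderiv ℝ (fun y => actF m K ψ t y) x v
          = (∑ i, (ψ t x).2 i * fderiv ℝ (fun y => (ψ t y).1) x v i)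
            - ∑ i, x.2 i * v.1 i := by
  intro t x
  rcases le_or_gt 0 t with ht | ht
  · exact action_primitive_of_liouville_difference_of_nonneg hK hKsupp hψ ht x
  · simpa only [actF_comp_neg, neg_neg] using
      action_primitive_of_liouville_difference_of_nonneg (contDiff_uncurry_comp_neg hK)
        hKsupp.comp_neg hψ.comp_neg (neg_nonneg.2 ht.le) x
end
end
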